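/- arXiv:2209.05431 — 4 statements merged into one kernel-verified Lean document; each statement's English description precedes it below -/
import Mathlib

section
/- Fix an integer m ≥ 1. For each n ∈ ℕ let G_n := {h ∈ F_n : h(I_n) ∩ I_m ≠ ∅}. Then lim_{n→∞} |G_n| / |F_n| = 0. -/
/-!
Write `h = θ ∘ τ^l` with `θ = θ_{-n}^{c_{-n}} ∘ ⋯ ∘ θ_n^{c_n}`. Then `θ` is strictly increasing,
the identity left of `-n` and a translation right of `n`, so it is determined by the set `θ(I_n)`;
these sets are exactly the `(2n+1)`-element subsets of `[-n, n + n²]`, an interval of `(n+1)²`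
integers. Hence `|F_n| = (2n+1) · C((n+1)², 2n+1)`. For `m ≤ n`, if `h(I_n)` meets `I_m` then so
does `θ(I_n)`, and the subsets through a fixed point form a fraction `(2n+1)/(n+1)²` of all of
them, so `|G_n| / |F_n| ≤ (2m+1)(2n+1)/(n+1)² → 0`.
-/

open Filter

/-- The `h`-right hand-side partial shift `θ_h : ℤ → ℤ`. -/
def theta (h : ℤ) : ℤ → ℤ := fun k => if k < h then k else k + 1

/-- The composition `θ_{-n}^{c(-n)} ∘ θ_{-n+1}^{c(-n+1)} ∘ ⋯ ∘ θ_{n}^{c(n)}`. -/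
def thetaProd (n : ℕ) (c : ℤ → ℕ) : ℤ → ℤ :=
  ((List.range (2 * n + 1)).map
    (fun i => (theta (-(n : ℤ) + i))^[c (-(n : ℤ) + i)])).foldr (· ∘ ·) id

/-- The `n`-th set of the right Følner sequence of `𝕁_ℤ`: maps of the form
`θ_{-n}^{h_{-n}} ∘ ⋯ ∘ θ_{n}^{h_n} ∘ τ^l` with `∑ h_i ≤ n²` and `-n ≤ l ≤ n`. -/
def FolnerSet (n : ℕ) : Set (ℤ → ℤ) :=
  {h | ∃ (c : ℤ → ℕ) (l : ℤ),
    (∑ i ∈ Finset.Icc (-(n : ℤ)) (n : ℤ), c i) ≤ n ^ 2 ∧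
    -(n : ℤ) ≤ l ∧ l ≤ (n : ℤ) ∧
    h = (thetaProd n c) ∘ (fun k => k + l)}

/-- `I_m = {k ∈ ℤ : -m ≤ k ≤ m}`. -/
def Iset (m : ℤ) : Set ℤ := Set.Icc (-m) m

open Finset

lemma Set.ncard_Icc_int (a b : ℤ) : (Set.Icc a b).ncard = (b + 1 - a).toNat := by
  rw [← coe_Icc, Set.ncard_coe_finset, Int.card_Icc]

lemma StrictMonoOn.eqOn_of_image_eq {α β : Type*} [LinearOrder α] [Preorder β] {f g : α → β}
    {s : Set α} (hs : s.Finite) (hf : StrictMonoOn f s) (hg : StrictMonoOn g s)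
    (h : f '' s = g '' s) : s.EqOn f g := by
  have : Finite s := hs.to_subtype
  intro x hx
  have := (hf.domRestrict.range_inj hg.domRestrict).mp
    (by rwa [Set.range_domRestrict, Set.range_domRestrict])
  exact congrFun this ⟨x, hx⟩

section powersetCard

variable {α : Type*} [DecidableEq α]

lemma card_filter_mem_powersetCard_le (U : Finset α) (k : ℕ) (a : α) :
    #{S ∈ U.powersetCard (k + 1) | a ∈ S} ≤ (#U - 1).choose k := by
  by_cases ha : a ∈ U
  · calc #{S ∈ U.powersetCard (k + 1) | a ∈ S}
        ≤ #(((U.erase a).powersetCard k).image (insert a)) := card_le_card fun S hS => by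
          obtain ⟨hS, haS⟩ := mem_filter.mp hS
          obtain ⟨hSU, hcard⟩ := mem_powersetCard.mp hS
          refine mem_image.mpr ⟨S.erase a, mem_powersetCard.mpr ⟨erase_subset_erase a hSU, ?_⟩,
            insert_erase haS⟩
          rw [card_erase_of_mem haS, hcard, Nat.add_sub_cancel]
      _ ≤ #((U.erase a).powersetCard k) := card_image_le
      _ = (#U - 1).choose k := by rw [card_powersetCard, card_erase_of_mem ha]
  · rw [filter_false_of_mem fun S hS haS => ha ((mem_powersetCard.mp hS).1 haS), card_empty]
    exact Nat.zero_le _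

lemma card_filter_inter_nonempty_powersetCard_le (U W : Finset α) (k : ℕ) :
    #{S ∈ U.powersetCard (k + 1) | (S ∩ W).Nonempty} ≤ #W * (#U - 1).choose k :=
  calc #{S ∈ U.powersetCard (k + 1) | (S ∩ W).Nonempty}
      ≤ #(W.biUnion fun a => {S ∈ U.powersetCard (k + 1) | a ∈ S}) := by
        refine card_le_card fun S hS => ?_
        obtain ⟨hS, a, ha⟩ := mem_filter.mp hS
        exact mem_biUnion.mpr ⟨a, (mem_inter.mp ha).2, mem_filter.mpr ⟨hS, (mem_inter.mp ha).1⟩⟩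
    _ ≤ ∑ a ∈ W, #{S ∈ U.powersetCard (k + 1) | a ∈ S} := card_biUnion_le
    _ ≤ ∑ _a ∈ W, (#U - 1).choose k :=
        sum_le_sum fun a _ => card_filter_mem_powersetCard_le U k a
    _ = #W * (#U - 1).choose k := by rw [sum_const, smul_eq_mul]

end powersetCard

lemma theta_iterate_apply (a x : ℤ) (k : ℕ) :
    (theta a)^[k] x = if x < a then x else x + k := by
  split_ifs with hx
  · exact Function.iterate_fixed (show theta a x = x from if_pos hx) k
  · induction k with
    | zero => simp
    | succ k ih =>
      rw [Function.iterate_succ_apply', ih, theta, if_neg (by omega)]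
      push_cast; ring

lemma foldr_theta_iterate_apply (c : ℤ → ℕ) {l : List ℤ} (hl : l.Pairwise (· < ·)) (x : ℤ) :
    (l.map fun j => (theta j)^[c j]).foldr (· ∘ ·) id x =
      x + ((l.filter (· ≤ x)).map fun j => (c j : ℤ)).sum := by
  induction l with
  | nil => simp
  | cons a l ih =>
    obtain ⟨ha, hl⟩ := List.pairwise_cons.mp hl
    simp only [List.map_cons, List.foldr_cons, Function.comp_apply, ih hl,
      theta_iterate_apply, List.filter_cons]
    by_cases hax : a ≤ x
    · have : 0 ≤ ((l.filter (· ≤ x)).map fun j => (c j : ℤ)).sum :=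
        List.sum_nonneg fun y hy => by obtain ⟨j, -, rfl⟩ := List.mem_map.mp hy; positivity
      simp only [hax, decide_true, if_true, List.map_cons, List.sum_cons]
      rw [if_neg (by omega)]; ring
    · have : l.filter (· ≤ x) = [] :=
        List.filter_eq_nil_iff.mpr fun b hb => by have := ha b hb; simp; omega
      simp [hax, this]

lemma thetaProd_apply (n : ℕ) (c : ℤ → ℕ) (x : ℤ) :
    thetaProd n c x = x + ∑ j ∈ Icc (-(n : ℤ)) n with j ≤ x, (c j : ℤ) := by
  set l := (List.range (2 * n + 1)).map fun i : ℕ => -(n : ℤ) + i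
  have hl : l.Pairwise (· < ·) :=
    List.pairwise_map.mpr (List.pairwise_lt_range.imp fun h => by omega)
  have hIcc : l.toFinset = Icc (-(n : ℤ)) n := by
    ext j
    simp only [l, List.mem_toFinset, List.mem_map, List.mem_range, mem_Icc]
    exact ⟨by rintro ⟨i, hi, rfl⟩; omega, fun h => ⟨(j + n).toNat, by omega, by omega⟩⟩
  -- in `thetaProd`, `List.range (2 * n + 1)` is coerced to a `List ℤ` by a monadic lift
  have hprod : thetaProd n c = (l.map fun j => (theta j)^[c j]).foldr (· ∘ ·) id := by
    simp only [thetaProd, l, List.map_map, List.pure_def, List.bind_eq_flatMap,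
      ← List.map_eq_flatMap]
    rfl
  rw [hprod, foldr_theta_iterate_apply c hl, ← List.sum_toFinset _ ((hl.filter _).nodup),
    List.toFinset_filter, hIcc]
  simp only [decide_eq_true_eq]

section thetaProd

variable {n : ℕ} {c : ℤ → ℕ} {x : ℤ}

lemma thetaProd_of_lt (hx : x < -(n : ℤ)) : thetaProd n c x = x := by
  rw [thetaProd_apply, filter_false_of_mem fun j hj => by simp at hj; omega, sum_empty,
    add_zero]

lemma self_le_thetaProd : x ≤ thetaProd n c x := by
  rw [thetaProd_apply]
  exact le_add_of_nonneg_right (sum_nonneg fun _ _ => by positivity)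

lemma thetaProd_apply_natCast : thetaProd n c n = n + ∑ j ∈ Icc (-(n : ℤ)) n, (c j : ℤ) := by
  rw [thetaProd_apply, filter_true_of_mem fun j hj => (mem_Icc.mp hj).2]

lemma thetaProd_of_le (hx : (n : ℤ) ≤ x) : thetaProd n c x = x + (thetaProd n c n - n) := by
  rw [thetaProd_apply_natCast, thetaProd_apply, filter_true_of_mem fun j hj => by simp at hj; omega]
  ring

lemma thetaProd_add_one (x : ℤ) : thetaProd n c (x + 1) =
    thetaProd n c x + 1 + if x + 1 ∈ Icc (-(n : ℤ)) n then (c (x + 1) : ℤ) else 0 := by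
  have hle : {j ∈ Icc (-(n : ℤ)) n | j ≤ x + 1 ∧ j ≤ x} = {j ∈ Icc (-(n : ℤ)) n | j ≤ x} :=
    filter_congr fun j _ => by omega
  have heq :
      {j ∈ Icc (-(n : ℤ)) n | j ≤ x + 1 ∧ ¬j ≤ x} = {j ∈ Icc (-(n : ℤ)) n | x + 1 = j} :=
    filter_congr fun j _ => by omega
  rw [thetaProd_apply, thetaProd_apply, ← sum_filter_add_sum_filter_not _ (· ≤ x),
    filter_filter, filter_filter, hle, heq, sum_filter (x + 1 = ·), sum_ite_eq]
  ring

lemma strictMono_thetaProd : StrictMono (thetaProd n c) :=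
  strictMono_int_of_lt_succ fun x => by
    rw [thetaProd_add_one]; split_ifs <;> omega

end thetaProd

lemma thetaProd_eq_of_eqOn {n : ℕ} {c c' : ℤ → ℕ}
    (h : (Set.Icc (-(n : ℤ)) n).EqOn (thetaProd n c) (thetaProd n c')) :
    thetaProd n c = thetaProd n c' := by
  funext x
  rcases lt_or_ge x (-(n : ℤ)) with hx | hx
  · rw [thetaProd_of_lt hx, thetaProd_of_lt hx]
  rcases le_or_gt x n with hx' | hx'
  · exact h ⟨hx, hx'⟩
  · rw [thetaProd_of_le hx'.le, thetaProd_of_le hx'.le, h ⟨by omega, le_rfl⟩]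

def gaps (g : ℤ → ℤ) (x : ℤ) : ℕ := (g x - g (x - 1) - 1).toNat

lemma thetaProd_gaps {n : ℕ} {g : ℤ → ℤ} (hg : g (-n - 1) = -n - 1)
    (hstep : ∀ x ∈ Set.Icc (-(n : ℤ)) n, g (x - 1) < g x) {x : ℤ}
    (hx : x ∈ Set.Icc (-(n : ℤ) - 1) n) :
    thetaProd n (gaps g) x = g x := by
  obtain ⟨hx₁, hx₂⟩ := hx
  induction x, hx₁ using Int.leInduction with
  | base => rw [thetaProd_of_lt (by omega), hg]
  | succ x hx ih =>
    have hlt := hstep (x + 1) ⟨by omega, hx₂⟩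
    rw [add_sub_cancel_right] at hlt
    rw [thetaProd_add_one, if_pos (mem_Icc.mpr ⟨by omega, hx₂⟩), ih (by omega), gaps,
      add_sub_cancel_right, Int.toNat_of_nonneg (by omega)]
    ring

def thetaMaps (n : ℕ) : Set (ℤ → ℤ) :=
  {θ | ∃ c : ℤ → ℕ, ∑ i ∈ Icc (-(n : ℤ)) n, c i ≤ n ^ 2 ∧ thetaProd n c = θ}

def compShift (p : ℤ × (ℤ → ℤ)) : ℤ → ℤ := p.2 ∘ (· + p.1)

lemma FolnerSet_eq_image (n : ℕ) :
    FolnerSet n = compShift '' (Set.Icc (-(n : ℤ)) n ×ˢ thetaMaps n) := by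
  ext h
  constructor
  · rintro ⟨c, l, hc, hl₁, hl₂, rfl⟩
    exact ⟨(l, thetaProd n c), ⟨⟨hl₁, hl₂⟩, c, hc, rfl⟩, rfl⟩
  · rintro ⟨⟨l, _⟩, ⟨⟨hl₁, hl₂⟩, c, hc, rfl⟩, rfl⟩
    exact ⟨c, l, hc, hl₁, hl₂, rfl⟩

lemma injOn_compShift (n : ℕ) : Set.InjOn compShift (Set.univ ×ˢ thetaMaps n) := by
  rintro ⟨l, _⟩ ⟨-, c, -, rfl⟩ ⟨l', _⟩ ⟨-, c', -, rfl⟩ h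
  have hl : l = l' := by
    have := congrFun h (-n - 1 - max l l')
    simp only [compShift, Function.comp_apply] at this
    rw [thetaProd_of_lt (by omega), thetaProd_of_lt (by omega)] at this
    omega
  subst hl
  exact Prod.ext rfl (funext fun y => by simpa [compShift] using congrFun h (y - l))

lemma ncard_FolnerSet (n : ℕ) : (FolnerSet n).ncard = (2 * n + 1) * (thetaMaps n).ncard := by
  rw [FolnerSet_eq_image,
    ((injOn_compShift n).mono (Set.prod_mono (Set.subset_univ _) le_rfl)).ncard_image,
    Set.ncard_prod, Set.ncard_Icc_int]
  congr 1
  omega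

noncomputable def windowImage (n : ℕ) (θ : ℤ → ℤ) : Finset ℤ := (Icc (-(n : ℤ)) n).image θ

noncomputable def windowImages (n : ℕ) : Finset (Finset ℤ) :=
  (Icc (-(n : ℤ)) (n + n ^ 2)).powersetCard (2 * n + 1)

lemma card_windowImage_thetaProd (n : ℕ) (c : ℤ → ℕ) :
    #(windowImage n (thetaProd n c)) = 2 * n + 1 := by
  rw [windowImage, card_image_of_injective _ strictMono_thetaProd.injective, Int.card_Icc]
  omega

lemma mapsTo_windowImage (n : ℕ) :
    Set.MapsTo (windowImage n) (thetaMaps n) (windowImages n) := by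
  rintro _ ⟨c, hc, rfl⟩
  refine mem_powersetCard.mpr ⟨fun y hy => ?_, card_windowImage_thetaProd n c⟩
  obtain ⟨x, hx, rfl⟩ := mem_image.mp hy
  obtain ⟨hx₁, hx₂⟩ := mem_Icc.mp hx
  have hle : thetaProd n c x ≤ thetaProd n c n := strictMono_thetaProd.monotone hx₂
  have hsum : ∑ j ∈ Icc (-(n : ℤ)) n, (c j : ℤ) ≤ n ^ 2 := by exact_mod_cast hc
  have := self_le_thetaProd (n := n) (c := c) (x := x)
  rw [thetaProd_apply_natCast] at hle
  exact mem_Icc.mpr ⟨by omega, by omega⟩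

lemma injOn_windowImage (n : ℕ) : Set.InjOn (windowImage n) (thetaMaps n) := by
  rintro _ ⟨c, -, rfl⟩ _ ⟨c', -, rfl⟩ h
  refine thetaProd_eq_of_eqOn (StrictMonoOn.eqOn_of_image_eq (Set.finite_Icc _ _)
    (strictMono_thetaProd.strictMonoOn _) (strictMono_thetaProd.strictMonoOn _) ?_)
  simpa [windowImage, ← coe_inj] using h

lemma surjOn_windowImage (n : ℕ) :
    Set.SurjOn (windowImage n) (thetaMaps n) (windowImages n) := by
  intro S hS
  obtain ⟨hSU, hcard⟩ := mem_powersetCard.mp hS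
  set e := S.orderEmbOfFin hcard
  set g : ℤ → ℤ := fun x =>
    if x < -(n : ℤ) then x else e (Fin.ofNat (2 * n + 1) (x + n).toNat)
  have hg : g (-n - 1) = -n - 1 := if_pos (by omega)
  have hgS : ∀ x ∈ Set.Icc (-(n : ℤ)) n, g x ∈ S := fun x hx => by
    simp only [g, if_neg (not_lt.mpr hx.1)]
    exact S.orderEmbOfFin_mem hcard _
  have hstep : ∀ x ∈ Set.Icc (-(n : ℤ)) n, g (x - 1) < g x := by
    rintro x ⟨hx₁, hx₂⟩
    rcases hx₁.eq_or_lt with rfl | hx₁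
    · have := (mem_Icc.mp (hSU (hgS (-n) ⟨le_rfl, by omega⟩))).1
      rw [hg]
      omega
    · simp only [g, if_neg (by omega : ¬x - 1 < -n), if_neg (by omega : ¬x < -n)]
      refine e.strictMono (Fin.lt_def.mpr ?_)
      simp only [Fin.val_ofNat]
      rw [Nat.mod_eq_of_lt (by omega), Nat.mod_eq_of_lt (by omega)]
      omega
  have hθ : ∀ x ∈ Set.Icc (-(n : ℤ) - 1) n, thetaProd n (gaps g) x = g x :=
    fun x hx => thetaProd_gaps hg hstep hx
  have himage : windowImage n (thetaProd n (gaps g)) ⊆ S := fun y hy => by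
    obtain ⟨x, hx, rfl⟩ := mem_image.mp hy
    obtain ⟨hx₁, hx₂⟩ := mem_Icc.mp hx
    rw [hθ x ⟨by omega, hx₂⟩]
    exact hgS x ⟨hx₁, hx₂⟩
  refine ⟨thetaProd n (gaps g), ⟨gaps g, ?_, rfl⟩,
    eq_of_subset_of_card_le himage (by rw [hcard, card_windowImage_thetaProd])⟩
  have hn := (mem_Icc.mp (hSU (hgS n ⟨by omega, le_rfl⟩))).2
  rw [← hθ n ⟨by omega, le_rfl⟩, thetaProd_apply_natCast] at hn
  exact_mod_cast (show ∑ j ∈ Icc (-(n : ℤ)) n, (gaps g j : ℤ) ≤ n ^ 2 by omega)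

lemma bijOn_windowImage (n : ℕ) : Set.BijOn (windowImage n) (thetaMaps n) (windowImages n) :=
  ⟨mapsTo_windowImage n, injOn_windowImage n, surjOn_windowImage n⟩

lemma card_Icc_neg_add_sq (n : ℕ) : #(Icc (-(n : ℤ)) (n + n ^ 2)) = (n + 1) ^ 2 := by
  rw [Int.card_Icc, show (n + n ^ 2 + 1 - -n : ℤ) = ((n + 1) ^ 2 : ℕ) by push_cast; ring,
    Int.toNat_natCast]

lemma ncard_thetaMaps (n : ℕ) : (thetaMaps n).ncard = ((n + 1) ^ 2).choose (2 * n + 1) := by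
  rw [← (injOn_windowImage n).ncard_image, (bijOn_windowImage n).image_eq, Set.ncard_coe_finset,
    windowImages, card_powersetCard, card_Icc_neg_add_sq]

lemma finite_thetaMaps (n : ℕ) : (thetaMaps n).Finite :=
  Set.Finite.of_finite_image ((bijOn_windowImage n).image_eq ▸ (windowImages n).finite_toSet)
    (injOn_windowImage n)

def hittingSet (n : ℕ) (m : ℤ) : Set (ℤ → ℤ) := {h ∈ FolnerSet n | h '' Iset n ∩ Iset m ≠ ∅}

lemma hittingSet_subset_image {n : ℕ} {m : ℤ} (hmn : m ≤ n) :
    hittingSet n m ⊆ compShift ''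
      (Set.Icc (-(n : ℤ)) n ×ˢ {θ ∈ thetaMaps n | (windowImage n θ ∩ Icc (-m) m).Nonempty}) := by
  rintro h ⟨hF, hne⟩
  rw [FolnerSet_eq_image] at hF
  obtain ⟨⟨l, _⟩, ⟨hl, c, hc, rfl⟩, rfl⟩ := hF
  obtain ⟨_, ⟨k, ⟨hk₁, hk₂⟩, rfl⟩, hkm₁, hkm₂⟩ := Set.nonempty_iff_ne_empty.mpr hne
  simp only [compShift, Function.comp_apply] at hkm₁ hkm₂
  have hlow : -(n : ℤ) ≤ k + l := by
    by_contra hlt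
    rw [thetaProd_of_lt (by omega)] at hkm₁
    omega
  have hhigh : k + l ≤ n := by
    have := self_le_thetaProd (n := n) (c := c) (x := k + l)
    omega
  refine ⟨(l, thetaProd n c), ⟨hl, ⟨c, hc, rfl⟩, thetaProd n c (k + l), ?_⟩, rfl⟩
  exact mem_inter.mpr ⟨mem_image_of_mem _ (mem_Icc.mpr ⟨hlow, hhigh⟩), mem_Icc.mpr ⟨hkm₁, hkm₂⟩⟩

lemma ncard_hittingSet_le {n : ℕ} {m : ℤ} (hmn : m ≤ n) :
    (hittingSet n m).ncard ≤ (2 * n + 1) * (#(Icc (-m) m) * ((n + 1) ^ 2 - 1).choose (2 * n)) := by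
  set B := {θ ∈ thetaMaps n | (windowImage n θ ∩ Icc (-m) m).Nonempty}
  have hB : (Set.Icc (-(n : ℤ)) n ×ˢ B).Finite :=
    (Set.finite_Icc _ _).prod ((finite_thetaMaps n).subset (Set.sep_subset _ _))
  calc (hittingSet n m).ncard
      ≤ (compShift '' (Set.Icc (-(n : ℤ)) n ×ˢ B)).ncard :=
        Set.ncard_le_ncard (hittingSet_subset_image hmn) (hB.image _)
    _ ≤ (Set.Icc (-(n : ℤ)) n ×ˢ B).ncard := Set.ncard_image_le hB
    _ = (2 * n + 1) * B.ncard := by rw [Set.ncard_prod, Set.ncard_Icc_int]; congr 1; omega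
    _ ≤ (2 * n + 1) * #{S ∈ windowImages n | (S ∩ Icc (-m) m).Nonempty} := by
        rw [← Set.ncard_coe_finset]
        refine Nat.mul_le_mul_left _ (Set.ncard_le_ncard_of_injOn (windowImage n) ?_
          ((injOn_windowImage n).mono (Set.sep_subset _ _)) (finite_toSet _))
        exact fun θ hθ => mem_filter.mpr ⟨mapsTo_windowImage n hθ.1, hθ.2⟩
    _ ≤ _ := by
        rw [← card_Icc_neg_add_sq]
        exact Nat.mul_le_mul_left _ (card_filter_inter_nonempty_powersetCard_le _ _ _)

lemma ncard_hittingSet_div_ncard_FolnerSet_le {n : ℕ} {m : ℤ} (hn : 0 < n) (hmn : m ≤ n) :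
    ((hittingSet n m).ncard : ℝ) / (FolnerSet n).ncard ≤ 2 * #(Icc (-m) m) / n := by
  have hC : (n + 1) ^ 2 * ((n + 1) ^ 2 - 1).choose (2 * n) =
      ((n + 1) ^ 2).choose (2 * n + 1) * (2 * n + 1) := by
    rw [show (n + 1) ^ 2 = (n ^ 2 + 2 * n) + 1 by ring, Nat.add_sub_cancel,
      Nat.add_one_mul_choose_eq]
  have hF : (FolnerSet n).ncard = (2 * n + 1) * ((n + 1) ^ 2).choose (2 * n + 1) := by
    rw [ncard_FolnerSet, ncard_thetaMaps]
  have hFpos : 0 < (FolnerSet n).ncard := by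
    rw [hF]
    exact Nat.mul_pos (by omega) (Nat.choose_pos (by nlinarith))
  have key : (hittingSet n m).ncard * n ≤ 2 * #(Icc (-m) m) * (FolnerSet n).ncard :=
    calc (hittingSet n m).ncard * n
        ≤ (2 * n + 1) * (#(Icc (-m) m) * ((n + 1) ^ 2 - 1).choose (2 * n)) * n :=
          Nat.mul_le_mul_right _ (ncard_hittingSet_le hmn)
      _ = #(Icc (-m) m) * (((n + 1) ^ 2 - 1).choose (2 * n) * (n * (2 * n + 1))) := by ring
      _ ≤ #(Icc (-m) m) * (((n + 1) ^ 2 - 1).choose (2 * n) * (2 * (n + 1) ^ 2)) :=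
          Nat.mul_le_mul_left _ (Nat.mul_le_mul_left _ (by nlinarith))
      _ = 2 * #(Icc (-m) m) * (FolnerSet n).ncard := by
          rw [hF, mul_comm (2 * n + 1), ← hC]; ring
  rw [div_le_div_iff₀ (by exact_mod_cast hFpos) (by exact_mod_cast hn)]
  exact_mod_cast key

theorem stmt0_general (m : ℤ) :
    Tendsto (fun n : ℕ =>
      (({h ∈ FolnerSet n | (h '' Iset (n : ℤ)) ∩ Iset m ≠ ∅}).ncard : ℝ)
        / ((FolnerSet n).ncard : ℝ)) atTop (nhds 0) := by
  refine squeeze_zero' (Eventually.of_forall fun n => by positivity) ?_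
    (tendsto_const_div_atTop_nhds_zero_nat (2 * #(Icc (-m) m) : ℝ))
  filter_upwards [eventually_ge_atTop (max 1 m.toNat)] with n hn
  exact ncard_hittingSet_div_ncard_FolnerSet_le (by omega) (by omega)

theorem stmt0 (m : ℤ) (hm : 1 ≤ m) :
    Tendsto (fun n : ℕ =>
      (({h ∈ FolnerSet n | (h '' Iset (n : ℤ)) ∩ Iset m ≠ ∅}).ncard : ℝ)
        / ((FolnerSet n).ncard : ℝ)) atTop (nhds 0) :=
  stmt0_general m
end

section
/- Let H be a separable complex Hilbert space, S a monoid, and for each s ∈ S let T_s be a linear isometry of H into itself such that T_s ∘ T_t = T_{st} for all s, t ∈ S and T_e = id for the identity e of S. Let (F_n) be a sequence of nonempty finite subsets of S such that for every s ∈ S, |sF_n Δ F_n| / |F_n| → 0 as n → ∞, where sF_n = {s·h : h ∈ F_n} and Δ denotes symmetric difference. Then the averages (1/|F_n|) Σ_{h ∈ F_n} T_h converge in the weak operator topology to the orthogonal projection of H onto the closed subspace {ξ ∈ H : T_s ξ = ξ for all s ∈ S}. -/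
open Filter
open scoped InnerProductSpace symmDiff

/-- The closed subspace of vectors fixed by every isometry `T s`. -/
def fixedSubmodule {H : Type*} [NormedAddCommGroup H] [InnerProductSpace ℂ H]
    {S : Type*} (T : S → H →ₗᵢ[ℂ] H) : Submodule ℂ H where
  carrier := {ξ | ∀ s, T s ξ = ξ}
  add_mem' := by
    intro a b ha hb s
    simp [map_add, ha s, hb s]
  zero_mem' := by
    intro s
    simp
  smul_mem' := by
    intro c a ha s
    simp [map_smul, ha s]

lemma isClosed_fixedSubmodule {H : Type*} [NormedAddCommGroup H] [InnerProductSpace ℂ H]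
    {S : Type*} (T : S → H →ₗᵢ[ℂ] H) : IsClosed ((fixedSubmodule T : Set H)) := by
  have : (fixedSubmodule T : Set H) = ⋂ s, {ξ | (T s) ξ = ξ} := by
    ext ξ
    simp [fixedSubmodule, Set.mem_iInter]
  rw [this]
  exact isClosed_iInter fun s => isClosed_eq (T s).continuous continuous_id

/-- The orthogonal projection onto the subspace of vectors fixed by every `T s`. -/
noncomputable def fixedProjection {H : Type*} [NormedAddCommGroup H] [InnerProductSpace ℂ H]
    [CompleteSpace H] {S : Type*} (T : S → H →ₗᵢ[ℂ] H) : H →L[ℂ] (fixedSubmodule T) :=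
  haveI : CompleteSpace (fixedSubmodule T) := (isClosed_fixedSubmodule T).completeSpace_coe
  (fixedSubmodule T).orthogonalProjectionOnto

/-! Write `A_n` for the averages and `P` for the projection. For fixed `ξ`, the vectors `η` with
`⟪A_n ξ, η⟫ → ⟪P ξ, η⟫` form a closed subspace, because the `A_n` are contractions. It contains
every fixed vector `η`, for which `⟪A_n ξ, η⟫ = ⟪ξ, η⟫ = ⟪P ξ, η⟫`, and every `T_s† ζ - ζ`, for
which `⟪A_n ξ, T_s† ζ - ζ⟫ = ⟪T_s A_n ξ - A_n ξ, ζ⟫`; the Følner condition makes this small, as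
`‖T_s A_n ξ - A_n ξ‖ ≤ 2 ‖ξ‖ |s F_n ∆ F_n| / |F_n|`. A vector orthogonal to all `T_s† ζ - ζ` is
fixed by every `T_s`, so the two families span a dense subspace. -/

open Finset
open scoped NNReal Topology

section FiniteSums

variable {α E : Type*} [DecidableEq α] [SeminormedAddCommGroup E] {f : α → E} {C : ℝ}

lemma norm_sum_sub_sum_le_mul_card_symmDiff (hf : ∀ a, ‖f a‖ ≤ C) (s t : Finset α) :
    ‖∑ a ∈ s, f a - ∑ a ∈ t, f a‖ ≤ C * #(s ∆ t) := by
  have hcard : #(s ∆ t) = #(s \ t) + #(t \ s) := by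
    rw [symmDiff_def, sup_eq_union, card_union_of_disjoint disjoint_sdiff_sdiff]
  rw [← sum_sdiff_sub_sum_sdiff, hcard, Nat.cast_add, mul_add]
  refine (norm_sub_le _ _).trans (add_le_add ?_ ?_) <;>
    simpa [mul_comm C] using norm_sum_le_of_le _ fun a _ ↦ hf a

lemma norm_sum_comp_sub_sum_image_le (hf : ∀ a, ‖f a‖ ≤ C) (F : Finset α) (φ : α → α) :
    ‖∑ a ∈ F, f (φ a) - ∑ b ∈ F.image φ, f b‖ ≤ C * (#F - #(F.image φ) : ℕ) := by
  have hfiber : ∀ b ∈ F.image φ, 1 ≤ #{a ∈ F | φ a = b} := by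
    intro b hb
    obtain ⟨a, ha, rfl⟩ := mem_image.1 hb
    exact card_pos.2 ⟨a, mem_filter.2 ⟨ha, rfl⟩⟩
  rw [sum_comp, ← sum_sub_distrib]
  calc ‖∑ b ∈ F.image φ, (#{a ∈ F | φ a = b} • f b - f b)‖
      = ‖∑ b ∈ F.image φ, (#{a ∈ F | φ a = b} - 1) • f b‖ := by
        congr 1
        refine sum_congr rfl fun b hb ↦ ?_
        rw [sub_nsmul _ (hfiber b hb), one_nsmul, sub_eq_add_neg]
    _ ≤ ∑ b ∈ F.image φ, ((#{a ∈ F | φ a = b} - 1 : ℕ) : ℝ) * C :=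
        norm_sum_le_of_le _ fun b _ ↦
          norm_nsmul_le.trans (mul_le_mul_of_nonneg_left (hf b) (Nat.cast_nonneg _))
    _ = C * (#F - #(F.image φ) : ℕ) := by
        rw [← sum_mul, ← Nat.cast_sum, sum_tsub_distrib _ hfiber, ← card_eq_sum_card_image,
          sum_const, smul_eq_mul, mul_one, mul_comm]

lemma norm_sum_comp_sub_sum_le (hC : 0 ≤ C) (hf : ∀ a, ‖f a‖ ≤ C) (F : Finset α) (φ : α → α) :
    ‖∑ a ∈ F, f (φ a) - ∑ a ∈ F, f a‖ ≤ 2 * C * #(F.image φ ∆ F) := by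
  have hsdiff : F \ F.image φ ⊆ F.image φ ∆ F := by
    rw [symmDiff_def]
    exact le_sup_right
  have hcard : ((#F - #(F.image φ) : ℕ) : ℝ) ≤ #(F.image φ ∆ F) := by
    exact_mod_cast (le_card_sdiff _ _).trans (card_le_card hsdiff)
  calc ‖∑ a ∈ F, f (φ a) - ∑ a ∈ F, f a‖
      ≤ ‖∑ a ∈ F, f (φ a) - ∑ b ∈ F.image φ, f b‖ + ‖∑ b ∈ F.image φ, f b - ∑ a ∈ F, f a‖ :=
        norm_sub_le_norm_sub_add_norm_sub _ _ _
    _ ≤ C * #(F.image φ ∆ F) + C * #(F.image φ ∆ F) := by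
        gcongr
        · exact (norm_sum_comp_sub_sum_image_le hf F φ).trans (by gcongr)
        · exact norm_sum_sub_sum_le_mul_card_symmDiff hf _ _
    _ = 2 * C * #(F.image φ ∆ F) := by ring

end FiniteSums

theorem tendsto_inner_of_orthogonal_span_eq_bot {𝕜 E ι : Type*} [RCLike 𝕜] [NormedAddCommGroup E]
    [InnerProductSpace 𝕜 E] [CompleteSpace E] {l : Filter ι} {x : ι → E} {y : E} {C : ℝ≥0}
    (hx : ∀ i, ‖x i‖ ≤ C) {s : Set E} (hs : (Submodule.span 𝕜 s)ᗮ = ⊥)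
    (h : ∀ η ∈ s, Tendsto (fun i ↦ ⟪x i, η⟫_𝕜) l (𝓝 ⟪y, η⟫_𝕜)) (η : E) :
    Tendsto (fun i ↦ ⟪x i, η⟫_𝕜) l (𝓝 ⟪y, η⟫_𝕜) := by
  let V : Submodule 𝕜 E :=
    { carrier := {η | Tendsto (fun i ↦ ⟪x i, η⟫_𝕜) l (𝓝 ⟪y, η⟫_𝕜)}
      add_mem' := fun ha hb ↦ by simpa only [Set.mem_ofPred_eq, inner_add_right] using ha.add hb
      zero_mem' := by simpa only [Set.mem_ofPred_eq, inner_zero_right] using tendsto_const_nhds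
      smul_mem' := fun c _ ha ↦ by
        simpa only [Set.mem_ofPred_eq, inner_smul_right] using ha.const_mul c }
  have hV : IsClosed (V : Set E) := by
    refine Equicontinuous.isClosed_setOfPred_tendsto ?_ (innerSL 𝕜 y).continuous
    refine (LipschitzWith.uniformEquicontinuous _ C fun i ↦ ?_).equicontinuous
    exact (innerSL 𝕜 (x i)).lipschitz.weaken (by simpa [← NNReal.coe_le_coe] using hx i)
  have hspan : (Submodule.span 𝕜 s).topologicalClosure ≤ V :=
    Submodule.topologicalClosure_minimal _ (Submodule.span_le.2 h) hV
  rw [Submodule.topologicalClosure_eq_top_iff.2 hs] at hspan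
  exact hspan Submodule.mem_top

section OrbitAverage

variable {𝕜 H S : Type*} [RCLike 𝕜] [NormedAddCommGroup H] [InnerProductSpace 𝕜 H]

def orbitAverage (T : S → H →ₗᵢ[𝕜] H) (F : Finset S) (ξ : H) : H :=
  (#F : 𝕜)⁻¹ • ∑ h ∈ F, T h ξ

variable (T : S → H →ₗᵢ[𝕜] H)

lemma inner_orbitAverage_left (F : Finset S) (ξ η : H) :
    ⟪orbitAverage T F ξ, η⟫_𝕜 = (#F : 𝕜)⁻¹ * ∑ h ∈ F, ⟪T h ξ, η⟫_𝕜 := by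
  simp [orbitAverage, inner_smul_left, sum_inner]

lemma norm_orbitAverage_le (F : Finset S) (ξ : H) : ‖orbitAverage T F ξ‖ ≤ ‖ξ‖ := by
  have hsum : ‖∑ h ∈ F, T h ξ‖ ≤ #F * ‖ξ‖ := by
    simpa using norm_sum_le_of_le F fun h _ ↦ ((T h).norm_map ξ).le
  rw [orbitAverage, norm_smul, norm_inv, RCLike.norm_natCast]
  rcases eq_or_ne #F 0 with hF | hF
  · simp [hF]
  · calc (#F : ℝ)⁻¹ * ‖∑ h ∈ F, T h ξ‖ ≤ (#F : ℝ)⁻¹ * (#F * ‖ξ‖) := by gcongr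
      _ = ‖ξ‖ := inv_mul_cancel_left₀ (by exact_mod_cast hF) _

variable [Monoid S] [DecidableEq S] {T}

lemma norm_map_orbitAverage_sub_le (hmul : ∀ s t, T (s * t) = (T s).comp (T t)) (s : S)
    (F : Finset S) (ξ : H) :
    ‖T s (orbitAverage T F ξ) - orbitAverage T F ξ‖ ≤
      2 * ‖ξ‖ * (#(F.image (s * ·) ∆ F) / #F) := by
  have hshift : T s (orbitAverage T F ξ) - orbitAverage T F ξ =
      (#F : 𝕜)⁻¹ • (∑ h ∈ F, T (s * h) ξ - ∑ h ∈ F, T h ξ) := by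
    simp [orbitAverage, map_sum, hmul, smul_sub]
  calc ‖T s (orbitAverage T F ξ) - orbitAverage T F ξ‖
      ≤ (#F : ℝ)⁻¹ * (2 * ‖ξ‖ * #(F.image (s * ·) ∆ F)) := by
        rw [hshift, norm_smul, norm_inv, RCLike.norm_natCast]
        gcongr
        exact norm_sum_comp_sub_sum_le (norm_nonneg ξ) (fun h ↦ ((T h).norm_map ξ).le) F (s * ·)
    _ = 2 * ‖ξ‖ * (#(F.image (s * ·) ∆ F) / #F) := by ring

lemma tendsto_map_orbitAverage_sub (hmul : ∀ s t, T (s * t) = (T s).comp (T t)) {s : S}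
    {F : ℕ → Finset S}
    (hFol : Tendsto (fun n ↦ (#((F n).image (s * ·) ∆ F n) : ℝ) / #(F n)) atTop (𝓝 0)) (ξ : H) :
    Tendsto (fun n ↦ T s (orbitAverage T (F n) ξ) - orbitAverage T (F n) ξ) atTop (𝓝 0) := by
  refine squeeze_zero_norm (fun n ↦ norm_map_orbitAverage_sub_le hmul s (F n) ξ) ?_
  simpa using hFol.const_mul (2 * ‖ξ‖)

lemma tendsto_inner_orbitAverage_adjoint_sub [CompleteSpace H]
    (hmul : ∀ s t, T (s * t) = (T s).comp (T t)) {s : S} {F : ℕ → Finset S}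
    (hFol : Tendsto (fun n ↦ (#((F n).image (s * ·) ∆ F n) : ℝ) / #(F n)) atTop (𝓝 0))
    (ξ : H) {p : H} (hp : T s p = p) (ζ : H) :
    Tendsto (fun n ↦ ⟪orbitAverage T (F n) ξ, (T s).toContinuousLinearMap.adjoint ζ - ζ⟫_𝕜)
      atTop (𝓝 ⟪p, (T s).toContinuousLinearMap.adjoint ζ - ζ⟫_𝕜) := by
  have hadj : ∀ x, ⟪x, (T s).toContinuousLinearMap.adjoint ζ - ζ⟫_𝕜 = ⟪T s x - x, ζ⟫_𝕜 := by
    intro x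
    simp [inner_sub_left, inner_sub_right, ContinuousLinearMap.adjoint_inner_right]
  simp only [hadj, hp, sub_self, inner_zero_left]
  simpa using (tendsto_map_orbitAverage_sub hmul hFol ξ).inner (tendsto_const_nhds (x := ζ))

end OrbitAverage

lemma inner_orbitAverage_of_mem_fixedSubmodule {H S : Type*} [NormedAddCommGroup H]
    [InnerProductSpace ℂ H] (T : S → H →ₗᵢ[ℂ] H) {F : Finset S}
    (hF : F.Nonempty) (ξ : H) {x : H} (hx : x ∈ fixedSubmodule T) :
    ⟪orbitAverage T F ξ, x⟫_ℂ = ⟪ξ, x⟫_ℂ := by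
  have hinner : ∀ h, ⟪T h ξ, x⟫_ℂ = ⟪ξ, x⟫_ℂ := fun h ↦ by
    conv_lhs => rw [← hx h]
    exact (T h).inner_map_map ξ x
  rw [inner_orbitAverage_left, sum_congr rfl fun h _ ↦ hinner h, sum_const, nsmul_eq_mul,
    inv_mul_cancel_left₀ (by exact_mod_cast hF.card_pos.ne')]

lemma orthogonal_span_fixedSubmodule_union_eq_bot {H S : Type*} [NormedAddCommGroup H]
    [InnerProductSpace ℂ H] [CompleteSpace H] (T : S → H →ₗᵢ[ℂ] H) :
    (Submodule.span ℂ ((fixedSubmodule T : Set H) ∪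
      ⋃ s, Set.range fun ζ ↦ (T s).toContinuousLinearMap.adjoint ζ - ζ))ᗮ = ⊥ := by
  refine (Submodule.eq_bot_iff _).2 fun η hη ↦ ?_
  have hperp : ∀ v ∈ (fixedSubmodule T : Set H) ∪
      ⋃ s, Set.range fun ζ ↦ (T s).toContinuousLinearMap.adjoint ζ - ζ, ⟪v, η⟫_ℂ = 0 :=
    fun v hv ↦ (Submodule.mem_orthogonal _ η).1 hη v (Submodule.subset_span hv)
  have hfixed : η ∈ fixedSubmodule T := fun s ↦ by
    have h := hperp _ (Or.inr (Set.mem_iUnion.2 ⟨s, T s η - η, rfl⟩))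
    rw [inner_sub_left, ContinuousLinearMap.adjoint_inner_left,
      LinearIsometry.coe_toContinuousLinearMap, ← inner_sub_right] at h
    exact sub_eq_zero.1 (inner_self_eq_zero.1 h)
  exact inner_self_eq_zero.1 (hperp η (Or.inl hfixed))

theorem stmt6_general {H : Type*} [NormedAddCommGroup H] [InnerProductSpace ℂ H]
    [CompleteSpace H]
    {S : Type*} [Monoid S] [DecidableEq S]
    (T : S → H →ₗᵢ[ℂ] H)
    (hmul : ∀ s t : S, T (s * t) = (T s).comp (T t))
    (F : ℕ → Finset S) (hne : ∀ n, (F n).Nonempty)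
    (hFol : ∀ s : S,
      Tendsto (fun n : ℕ =>
          ((((F n).image (fun h => s * h)) ∆ (F n)).card : ℝ) / ((F n).card : ℝ))
        atTop (nhds 0)) :
    ∀ ξ η : H,
      Tendsto (fun n : ℕ => ((F n).card : ℂ)⁻¹ * ∑ h ∈ F n, ⟪(T h) ξ, η⟫_ℂ)
        atTop (nhds ⟪((fixedProjection T ξ : H)), η⟫_ℂ) := by
  intro ξ η
  have : CompleteSpace (fixedSubmodule T) := (isClosed_fixedSubmodule T).completeSpace_coe
  simp only [← inner_orbitAverage_left]
  refine tendsto_inner_of_orthogonal_span_eq_bot (C := ‖ξ‖₊)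
    (fun n ↦ norm_orbitAverage_le T (F n) ξ) (orthogonal_span_fixedSubmodule_union_eq_bot T) ?_ η
  rintro x (hx | ⟨_, ⟨s, rfl⟩, ζ, rfl⟩)
  · have hproj : ⟪(fixedProjection T ξ : H), x⟫_ℂ = ⟪ξ, x⟫_ℂ :=
      (fixedSubmodule T).inner_orthogonalProjectionOnto_eq_of_mem_right ⟨x, hx⟩ ξ
    rw [hproj]
    exact tendsto_const_nhds.congr fun n ↦
      (inner_orbitAverage_of_mem_fixedSubmodule T (hne n) ξ hx).symm
  · exact tendsto_inner_orbitAverage_adjoint_sub hmul (hFol s) ξ ((fixedProjection T ξ).2 s) ζ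

theorem stmt6 {H : Type*} [NormedAddCommGroup H] [InnerProductSpace ℂ H]
    [CompleteSpace H] [TopologicalSpace.SeparableSpace H]
    {S : Type*} [Monoid S] [DecidableEq S]
    (T : S → H →ₗᵢ[ℂ] H)
    (hmul : ∀ s t : S, T (s * t) = (T s).comp (T t))
    (hone : T 1 = (LinearIsometry.id : H →ₗᵢ[ℂ] H))
    (F : ℕ → Finset S) (hne : ∀ n, (F n).Nonempty)
    (hFol : ∀ s : S,
      Tendsto (fun n : ℕ =>
          ((((F n).image (fun h => s * h)) ∆ (F n)).card : ℝ) / ((F n).card : ℝ))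
        atTop (nhds 0)) :
    ∀ ξ η : H,
      Tendsto (fun n : ℕ => ((F n).card : ℂ)⁻¹ * ∑ h ∈ F n, ⟪(T h) ξ, η⟫_ℂ)
        atTop (nhds ⟪((fixedProjection T ξ : H)), η⟫_ℂ) :=
  stmt6_general T hmul F hne hFol
end

section
/- Let H be a complex Hilbert space and let V be a subset of the bounded linear operators on H that is closed under addition, under multiplication by complex scalars, and under taking adjoints. If every operator T ∈ V is normal (i.e. T*T = TT*), then any two operators in V commute: ST = TS for all S, T ∈ V. -/
theorem stmt9 {H : Type*} [NormedAddCommGroup H] [InnerProductSpace ℂ H] [CompleteSpace H]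
    (V : Set (H →L[ℂ] H))
    (hadd : ∀ S ∈ V, ∀ T ∈ V, S + T ∈ V)
    (hsmul : ∀ (c : ℂ), ∀ T ∈ V, c • T ∈ V)
    (hstar : ∀ T ∈ V, ContinuousLinearMap.adjoint T ∈ V)
    (hnormal : ∀ T ∈ V,
      (ContinuousLinearMap.adjoint T) * T = T * (ContinuousLinearMap.adjoint T)) :
    ∀ S ∈ V, ∀ T ∈ V, S * T = T * S := by
  have hstar' : ∀ T ∈ V, star T ∈ V := by
    simpa [← ContinuousLinearMap.star_eq_adjoint] using hstar
  have hnorm : ∀ T ∈ V, star T * T = T * star T := by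
    simpa [← ContinuousLinearMap.star_eq_adjoint] using hnormal
  have key : ∀ S ∈ V, ∀ T ∈ V, star S * T = T * star S := by
    intro S hS T hT
    have hS' := hnorm S hS
    have hT' := hnorm T hT
    have e1 := hnorm (S + T) (hadd S hS T hT)
    rw [star_add] at e1
    have e2 := hnorm (S + Complex.I • T) (hadd S hS _ (hsmul Complex.I T hT))
    rw [star_add, star_smul, Complex.star_def, Complex.conj_I, neg_smul] at e2
    have eqA : star S * T + star T * S = S * star T + T * star S := by
      calc star S * T + star T * S
          = (star S + star T) * (S + T) - star S * S - star T * T := by noncomm_ring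
        _ = (S + T) * (star S + star T) - S * star S - T * star T := by rw [e1, hS', hT']
        _ = S * star T + T * star S := by noncomm_ring
    have h2 : Complex.I • (star S * T - star T * S)
        = Complex.I • (T * star S - S * star T) := by
      calc Complex.I • (star S * T - star T * S)
          = (star S + -(Complex.I • star T)) * (S + Complex.I • T)
              - star S * S - star T * T := by
            simp only [add_mul, mul_add, neg_mul, smul_mul_assoc, mul_smul_comm]
            match_scalars <;> simp [Complex.I_sq]
        _ = (S + Complex.I • T) * (star S + -(Complex.I • star T))
              - S * star S - T * star T := by rw [e2, hS', hT']
        _ = Complex.I • (T * star S - S * star T) := by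
            simp only [add_mul, mul_add, mul_neg, smul_mul_assoc, mul_smul_comm]
            match_scalars <;> simp [Complex.I_sq]
    have eqB : star S * T - star T * S = T * star S - S * star T :=
      smul_right_injective _ Complex.I_ne_zero h2
    have h3 : (2 : ℂ) • (star S * T) = (2 : ℂ) • (T * star S) := by
      calc (2 : ℂ) • (star S * T)
          = (star S * T + star T * S) + (star S * T - star T * S) := by module
        _ = (S * star T + T * star S) + (T * star S - S * star T) := by rw [eqA, eqB]
        _ = (2 : ℂ) • (T * star S) := by module
    exact smul_right_injective _ two_ne_zero h3
  intro S hS T hT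
  simpa using key (star S) (hstar' S hS) T hT
end

section
/- Let A be a unital C*-algebra, B ⊆ A a closed unital *-subalgebra, S a monoid, and for each s ∈ S let α_s : A → A be a unital *-homomorphism with α_{st} = α_s ∘ α_t, α_e = id, and α_s(B) ⊆ B for all s, t ∈ S. Suppose there is a sequence (F_n) of nonempty finite subsets of S such that for every s ∈ S, |F_n s Δ F_n| / |F_n| → 0 as n → ∞, where F_n s = {h·s : h ∈ F_n} and Δ is the symmetric difference. If ω is a state on B satisfying ω(α_s(b)) = ω(b) for all b ∈ B and s ∈ S, then there exists a state ω̃ on A such that ω̃ restricted to B equals ω and ω̃ ∘ α_s = ω̃ for every s ∈ S. -/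
/-!
Positivity makes a state `ω` on the unital *-subalgebra `B` contractive: `ω (u⋆u) ≥ 0` for
`u = b - ω b • 1` gives `‖ω b‖² ≤ ω (b⋆b) ≤ ‖b‖²`. By Hahn–Banach it extends to a functional `g`
on `A` with `‖g‖ ≤ 1 = g 1`, and such a functional is automatically positive. The Følner means
`ψₙ = 𝔼_{h ∈ Fₙ} g ∘ αₕ` are then states extending `ω` (as `ω` is invariant on `B`), with
`‖ψₙ (αₛ a) - ψₙ a‖ ≤ 2 ‖a‖ |Fₙ s ∆ Fₙ| / |Fₙ|`. By compactness they converge pointwise along an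
ultrafilter finer than `atTop`, and the limit is the required invariant state.
-/

open Filter Topology Finset ComplexConjugate
open scoped BigOperators ComplexOrder ComplexStarModule symmDiff

namespace Finset

variable {α β E : Type*} [SeminormedAddCommGroup E] {C : ℝ}

lemma norm_sum_comp_sub_sum_image_le [DecidableEq β] (s : Finset α) (f : α → β) {g : β → E}
    (hg : ∀ y, ‖g y‖ ≤ C) :
    ‖∑ x ∈ s, g (f x) - ∑ y ∈ s.image f, g y‖ ≤ C * (#s - #(s.image f)) := by
  set fiber : β → ℕ := fun y => #{x ∈ s | f x = y}
  have h_card : (#s : ℝ) = ∑ y ∈ s.image f, (fiber y : ℝ) := by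
    exact_mod_cast card_eq_sum_card_image f s
  rw [sum_comp g f, ← sum_sub_distrib]
  calc ‖∑ y ∈ s.image f, (fiber y • g y - g y)‖
      ≤ ∑ y ∈ s.image f, ((fiber y : ℝ) - 1) * C := by
        refine (norm_sum_le _ _).trans (sum_le_sum fun y hy => ?_)
        obtain ⟨x, hx, rfl⟩ := mem_image.1 hy
        obtain ⟨k, hk⟩ : ∃ k, fiber (f x) = k + 1 :=
          Nat.exists_eq_add_of_le' (card_pos.2 ⟨x, mem_filter.2 ⟨hx, rfl⟩⟩)
        rw [hk, succ_nsmul, add_sub_cancel_right, Nat.cast_succ, add_sub_cancel_right]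
        exact (norm_nsmul_le ..).trans (mul_le_mul_of_nonneg_left (hg _) k.cast_nonneg)
    _ = C * (#s - #(s.image f)) := by
        simp only [h_card, ← sum_mul, sum_sub_distrib, sum_const, nsmul_eq_mul, mul_one]
        ring

lemma norm_sum_sub_sum_le_card_symmDiff [DecidableEq β] (s t : Finset β) {g : β → E}
    (hg : ∀ y, ‖g y‖ ≤ C) :
    ‖∑ y ∈ t, g y - ∑ y ∈ s, g y‖ ≤ C * #(t ∆ s) := by
  rw [← sum_sdiff_sub_sum_sdiff, symmDiff_def, sup_eq_union,
    card_union_of_disjoint disjoint_sdiff_sdiff, Nat.cast_add, mul_add]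
  refine (norm_sub_le _ _).trans (add_le_add ?_ ?_) <;>
    exact (norm_sum_le _ _).trans ((sum_le_card_nsmul _ _ C fun y _ => hg y).trans_eq
      (by rw [nsmul_eq_mul, mul_comm]))

variable [DecidableEq α]

lemma card_sub_card_image_le_card_symmDiff (s : Finset α) (f : α → α) :
    (#s : ℝ) - #(s.image f) ≤ #(s.image f ∆ s) := by
  have h_sdiff : s \ s.image f ⊆ s.image f ∆ s := by
    rw [symmDiff_def, sup_eq_union]
    exact subset_union_right
  have := (card_le_card_sdiff_add_card (s := s) (t := s.image f)).trans
    (Nat.add_le_add_right (card_le_card h_sdiff) _)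
  rw [sub_le_iff_le_add]
  exact_mod_cast this

lemma norm_sum_comp_sub_sum_le (s : Finset α) (f : α → α) {g : α → E}
    (hg : ∀ x, ‖g x‖ ≤ C) :
    ‖∑ x ∈ s, g (f x) - ∑ x ∈ s, g x‖ ≤ 2 * C * #(s.image f ∆ s) := by
  rcases s.eq_empty_or_nonempty with rfl | ⟨x, -⟩
  · simp
  have hC : 0 ≤ C := (norm_nonneg _).trans (hg x)
  calc ‖∑ x ∈ s, g (f x) - ∑ x ∈ s, g x‖
      ≤ ‖∑ x ∈ s, g (f x) - ∑ y ∈ s.image f, g y‖ +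
          ‖∑ y ∈ s.image f, g y - ∑ x ∈ s, g x‖ :=
        norm_sub_le_norm_sub_add_norm_sub ..
    _ ≤ C * (#s - #(s.image f)) + C * #(s.image f ∆ s) :=
        add_le_add (norm_sum_comp_sub_sum_image_le s f hg)
          (norm_sum_sub_sum_le_card_symmDiff s _ hg)
    _ ≤ C * #(s.image f ∆ s) + C * #(s.image f ∆ s) := by
        gcongr
        exact card_sub_card_image_le_card_symmDiff s f
    _ = 2 * C * #(s.image f ∆ s) := by ring

lemma norm_expect_comp_sub_expect_le {𝕜 : Type*} [RCLike 𝕜] (s : Finset α) (f : α → α)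
    {g : α → 𝕜} (hg : ∀ x, ‖g x‖ ≤ C) :
    ‖𝔼 x ∈ s, g (f x) - 𝔼 x ∈ s, g x‖ ≤ 2 * C * (#(s.image f ∆ s) / #s) := by
  rw [expect_eq_sum_div_card, expect_eq_sum_div_card, ← sub_div, norm_div, RCLike.norm_natCast,
    mul_div_assoc']
  gcongr
  exact norm_sum_comp_sub_sum_le s f hg

end Finset

lemma IsSelfAdjoint.norm_add_I_smul_one_sq_le {A : Type*} [CStarAlgebra A] [Nontrivial A] {a : A}
    (ha : IsSelfAdjoint a) (t : ℝ) :
    ‖a + (t * Complex.I) • (1 : A)‖ ^ 2 ≤ ‖a‖ ^ 2 + t ^ 2 := by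
  have h_scalar : (t * Complex.I) * (t * -Complex.I) = (t ^ 2 : ℂ) := by
    ring_nf
    rw [Complex.I_sq]
    ring
  have h_star_mul : star (a + (t * Complex.I) • (1 : A)) * (a + (t * Complex.I) • 1)
      = a * a + (t ^ 2 : ℂ) • 1 := by
    simp only [star_add, star_smul, ha.star_eq, star_one, Complex.star_def, map_mul,
      Complex.conj_ofReal, Complex.conj_I, add_mul, mul_add, smul_mul_assoc, mul_smul_comm,
      one_mul, mul_one, smul_add, smul_smul, h_scalar]
    module
  rw [sq, ← CStarRing.norm_star_mul_self, h_star_mul]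
  calc ‖a * a + (t ^ 2 : ℂ) • (1 : A)‖ ≤ ‖a‖ * ‖a‖ + t ^ 2 := by
        refine (norm_add_le _ _).trans (add_le_add (norm_mul_le a a) ?_)
        simp [norm_smul]
    _ = ‖a‖ ^ 2 + t ^ 2 := by ring

namespace ContinuousLinearMap

variable {A : Type*} [CStarAlgebra A] {g : A →L[ℂ] ℂ}

lemma im_apply_eq_zero_of_norm_le_one (hg : ‖g‖ ≤ 1) (hg1 : g 1 = 1) {a : A}
    (ha : IsSelfAdjoint a) : (g a).im = 0 := by
  have : Nontrivial A := nontrivial_of_ne 1 0 fun h => by simp [h] at hg1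
  have key (t : ℝ) : (g a).re ^ 2 + ((g a).im + t) ^ 2 ≤ ‖a‖ ^ 2 + t ^ 2 := by
    have h_apply : g (a + (t * Complex.I) • 1) = g a + t * Complex.I := by
      rw [map_add, map_smul, hg1, smul_eq_mul, mul_one]
    calc (g a).re ^ 2 + ((g a).im + t) ^ 2 = ‖g (a + (t * Complex.I) • 1)‖ ^ 2 := by
          rw [h_apply, Complex.sq_norm, Complex.normSq_apply]
          simp only [Complex.add_re, Complex.add_im, Complex.mul_re, Complex.mul_im,
            Complex.ofReal_re, Complex.ofReal_im, Complex.I_re, Complex.I_im]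
          ring
      _ ≤ ‖a + (t * Complex.I) • (1 : A)‖ ^ 2 := by
          gcongr
          exact (g.le_of_opNorm_le hg _).trans_eq (one_mul _)
      _ ≤ ‖a‖ ^ 2 + t ^ 2 := ha.norm_add_I_smul_one_sq_le t
  -- `key` says `2 t (g a).im ≤ ‖a‖² - ‖g a‖²` for every real `t`
  by_contra h_im
  have ht : 2 * (g a).im * ((‖a‖ ^ 2 + 1) / (2 * (g a).im)) = ‖a‖ ^ 2 + 1 := by
    field_simp
  nlinarith [key ((‖a‖ ^ 2 + 1) / (2 * (g a).im))]

lemma apply_nonneg_of_norm_le_one [PartialOrder A] [StarOrderedRing A] (hg : ‖g‖ ≤ 1)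
    (hg1 : g 1 = 1) {a : A} (ha : 0 ≤ a) : 0 ≤ g a := by
  have : Nontrivial A := nontrivial_of_ne 1 0 fun h => by simp [h] at hg1
  have h_im := g.im_apply_eq_zero_of_norm_le_one hg hg1 (.of_nonneg ha)
  have h_gap : ‖algebraMap ℝ A ‖a‖ - a‖ ≤ ‖a‖ :=
    (CStarAlgebra.norm_le_norm_of_nonneg_of_le
      (sub_nonneg.2 (IsSelfAdjoint.of_nonneg ha).le_algebraMap_norm_self)
      (sub_le_self _ ha)).trans_eq (by simp)
  have h_apply : g (algebraMap ℝ A ‖a‖ - a) = ((‖a‖ - (g a).re : ℝ) : ℂ) := by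
    rw [map_sub, Algebra.algebraMap_eq_smul_one, ← Complex.coe_smul, map_smul, hg1]
    apply Complex.ext <;> simp [h_im]
  have h_bound := (g.le_of_opNorm_le hg _).trans ((one_mul _).trans_le h_gap)
  rw [h_apply, Complex.norm_real, Real.norm_eq_abs] at h_bound
  exact Complex.nonneg_iff.2 ⟨by linarith [(abs_le.1 h_bound).2], h_im.symm⟩

end ContinuousLinearMap

namespace StarSubalgebra

variable {A : Type*} [CStarAlgebra A] [PartialOrder A] [StarOrderedRing A]
  {B : StarSubalgebra ℂ A} {ω : B →ₗ[ℂ] ℂ}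
  (hpos : ∀ b : B, 0 ≤ (b : A) → 0 ≤ ω b) (hω1 : ω 1 = 1)
include hpos hω1

lemma im_apply_eq_zero_of_isSelfAdjoint {b : B} (hb : IsSelfAdjoint b) : (ω b).im = 0 := by
  have hb' : IsSelfAdjoint (b : A) := congrArg Subtype.val hb
  have h_nonneg := hpos ((‖(b : A)‖ : ℂ) • 1 + b) <| by
    simpa [Algebra.algebraMap_eq_smul_one, ← sub_eq_add_neg, add_comm] using
      sub_nonneg.2 hb'.neg_algebraMap_norm_le_self
  rw [map_add, map_smul, hω1, Complex.nonneg_iff] at h_nonneg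
  simpa using h_nonneg.2.symm

lemma map_star_apply (b : B) : ω (star b) = conj (ω b) := by
  have h_re := im_apply_eq_zero_of_isSelfAdjoint hpos hω1 (ℜ b).prop
  have h_im := im_apply_eq_zero_of_isSelfAdjoint hpos hω1 (ℑ b).prop
  conv_lhs => rw [← realPart_add_I_smul_imaginaryPart b]
  conv_rhs => rw [← realPart_add_I_smul_imaginaryPart b]
  simp only [star_add, star_smul, (ℜ b).prop.star_eq, (ℑ b).prop.star_eq, map_add, map_smul,
    map_mul, smul_eq_mul, Complex.conj_eq_iff_im.2 h_re, Complex.conj_eq_iff_im.2 h_im,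
    Complex.star_def, Complex.conj_I]

lemma norm_apply_le (b : B) : ‖ω b‖ ≤ ‖(b : A)‖ := by
  have h_expand :
      ω (star (b - ω b • 1) * (b - ω b • 1)) = ω (star b * b) - (‖ω b‖ ^ 2 : ℝ) := by
    simp only [star_sub, star_smul, star_one, sub_mul, mul_sub, smul_mul_assoc, mul_smul_comm,
      one_mul, mul_one, map_sub, map_smul, smul_eq_mul, hω1, map_star_apply hpos hω1,
      Complex.star_def]
    rw [Complex.conj_mul', Complex.ofReal_pow]
    ring
  have h_le : star (b : A) * b ≤ ((‖(b : A)‖ ^ 2 : ℝ) : ℂ) • 1 := by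
    rw [Complex.coe_smul, ← Algebra.algebraMap_eq_smul_one]
    exact CStarAlgebra.star_mul_le_algebraMap_norm_sq
  have h_lower := hpos (star (b - ω b • 1) * (b - ω b • 1)) <| by
    simpa using star_mul_self_nonneg ((b - ω b • 1 : B) : A)
  have h_upper := hpos (((‖(b : A)‖ ^ 2 : ℝ) : ℂ) • 1 - star b * b) <| by
    simpa using sub_nonneg.2 h_le
  rw [h_expand, Complex.nonneg_iff, Complex.sub_re, Complex.ofReal_re, sub_nonneg] at h_lower
  rw [map_sub, map_smul, hω1, smul_eq_mul, mul_one, Complex.nonneg_iff, Complex.sub_re,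
    Complex.ofReal_re, sub_nonneg] at h_upper
  exact (pow_le_pow_iff_left₀ (norm_nonneg _) (norm_nonneg _) two_ne_zero).1
    (h_lower.1.trans h_upper.1)

lemma exists_extension_norm_le_one : ∃ g : A →L[ℂ] ℂ, ‖g‖ ≤ 1 ∧ ∀ b : B, g b = ω b := by
  have h_bound : ∀ b : B, ‖ω b‖ ≤ 1 * ‖b‖ := fun b =>
    (norm_apply_le hpos hω1 b).trans_eq (one_mul _).symm
  obtain ⟨g, hg_ext, hg_norm⟩ :=
    exists_extension_norm_eq (Subalgebra.toSubmodule B.toSubalgebra) (ω.mkContinuous 1 h_bound)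
  exact ⟨g, hg_norm ▸ LinearMap.mkContinuous_norm_le _ zero_le_one _, hg_ext⟩

end StarSubalgebra

lemma exists_linearMap_tendsto_ultrafilter {𝕜 ι M : Type*} [RCLike 𝕜] [AddCommMonoid M]
    [Module 𝕜 M] (ψ : ι → M →ₗ[𝕜] 𝕜) (C : M → ℝ) (hψ : ∀ i x, ‖ψ i x‖ ≤ C x)
    (U : Ultrafilter ι) : ∃ L : M →ₗ[𝕜] 𝕜, ∀ x, Tendsto (fun i => ψ i x) U (𝓝 (L x)) := by
  have h_compact : IsCompact (Set.univ.pi fun x => Metric.closedBall (0 : 𝕜) (C x)) :=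
    isCompact_univ_pi fun x => isCompact_closedBall 0 (C x)
  obtain ⟨f, -, hf⟩ := h_compact.ultrafilter_le_nhds (U.map fun i => ⇑(ψ i)) <| by
    rw [Ultrafilter.coe_map, le_principal_iff, Filter.mem_map]
    exact univ_mem' fun i => Set.mem_univ_pi.2 fun x => mem_closedBall_zero_iff.2 (hψ i x)
  exact ⟨linearMapOfTendsto f ψ hf, tendsto_pi_nhds.1 hf⟩

theorem stmt11_general {A : Type*} [CStarAlgebra A] [PartialOrder A] [StarOrderedRing A]
    (B : StarSubalgebra ℂ A)
    {S : Type*} [Monoid S] [DecidableEq S]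
    (α : S → A →⋆ₐ[ℂ] A)
    (hmul : ∀ s t : S, α (s * t) = (α s).comp (α t))
    (hB_inv : ∀ s : S, ∀ b ∈ B, α s b ∈ B)
    (F : ℕ → Finset S) (hne : ∀ n, (F n).Nonempty)
    (hFol : ∀ s : S,
      Tendsto (fun n : ℕ =>
          ((((F n).image (fun h => h * s)) ∆ (F n)).card : ℝ) / ((F n).card : ℝ))
        atTop (nhds 0))
    (ω : B →ₗ[ℂ] ℂ)
    (hpos : ∀ b : B, 0 ≤ (b : A) → 0 ≤ ω b)
    (hstate : ω 1 = 1)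
    (hinvar : ∀ s : S, ∀ b c : B, (c : A) = α s (b : A) → ω c = ω b) :
    ∃ ω' : A →ₗ[ℂ] ℂ,
      (∀ a : A, 0 ≤ a → 0 ≤ ω' a) ∧ ω' 1 = 1 ∧
        (∀ b : B, ω' (b : A) = ω b) ∧ (∀ s : S, ∀ a : A, ω' (α s a) = ω' a) := by
  obtain ⟨g, hg_norm, hg_ext⟩ := B.exists_extension_norm_le_one hpos hstate
  have hg_one : g 1 = 1 := (hg_ext 1).trans hstate
  have hg_α (h : S) (a : A) : ‖g (α h a)‖ ≤ ‖a‖ :=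
    (g.le_of_opNorm_le hg_norm _).trans
      ((one_mul _).trans_le (NonUnitalStarAlgHom.norm_apply_le _ a))
  let ψ (n : ℕ) : A →ₗ[ℂ] ℂ := 𝔼 h ∈ F n, (g : A →ₗ[ℂ] ℂ) ∘ₗ (α h).toLinearMap
  have hψ (n : ℕ) (a : A) : ψ n a = 𝔼 h ∈ F n, g (α h a) := by
    simp [ψ, expect, LinearMap.sum_apply]
  obtain ⟨U, hU⟩ := Ultrafilter.exists_le (atTop : Filter ℕ)
  obtain ⟨L, hL⟩ := exists_linearMap_tendsto_ultrafilter ψ (‖·‖)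
    (fun n a => (hψ n a).symm ▸ (RCLike.norm_expect_le (K := ℂ)).trans
      (expect_le (hne n) fun h _ => hg_α h a)) U
  have hL_const (a : A) (c : ℂ) (hc : ∀ h, g (α h a) = c) : L a = c :=
    tendsto_nhds_unique (hL a) (tendsto_const_nhds.congr fun n => by simp [hψ, hc, hne n])
  refine ⟨L, fun a ha => ?_, hL_const 1 1 (by simp [hg_one]),
    fun b => hL_const b (ω b) fun h => ?_, fun s a => ?_⟩
  · exact ge_of_tendsto' (hL a) fun n => (hψ n a).symm ▸ expect_nonneg fun h _ =>
      g.apply_nonneg_of_norm_le_one hg_norm hg_one (map_nonneg (α h) ha)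
  · exact (hg_ext ⟨_, hB_inv h b b.2⟩).trans (hinvar h b _ rfl)
  · have h_shift (h : S) : g (α h (α s a)) = g (α (h * s) a) := by rw [hmul]; rfl
    have h_bound (n : ℕ) : ‖ψ n (α s a) - ψ n a‖ ≤
        2 * ‖a‖ * (#((F n).image (· * s) ∆ F n) / #(F n)) := by
      simp only [hψ, h_shift]
      -- elaborated without the expected type, against which unifying `g` times out
      exact (norm_expect_comp_sub_expect_le (F n) (· * s) (hg_α · a) :)
    have h_asymp : Tendsto (fun n => ψ n (α s a) - ψ n a) atTop (𝓝 0) :=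
      squeeze_zero_norm h_bound (by simpa using (hFol s).const_mul (2 * ‖a‖))
    exact sub_eq_zero.1 (tendsto_nhds_unique ((hL _).sub (hL a)) (h_asymp.mono_left hU))

theorem stmt11 {A : Type*} [CStarAlgebra A] [PartialOrder A] [StarOrderedRing A]
    (B : StarSubalgebra ℂ A) (hB : IsClosed (B : Set A))
    {S : Type*} [Monoid S] [DecidableEq S]
    (α : S → A →⋆ₐ[ℂ] A)
    (hmul : ∀ s t : S, α (s * t) = (α s).comp (α t))
    (hone : α 1 = StarAlgHom.id ℂ A)
    (hB_inv : ∀ s : S, ∀ b ∈ B, α s b ∈ B)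
    (F : ℕ → Finset S) (hne : ∀ n, (F n).Nonempty)
    (hFol : ∀ s : S,
      Tendsto (fun n : ℕ =>
          ((((F n).image (fun h => h * s)) ∆ (F n)).card : ℝ) / ((F n).card : ℝ))
        atTop (nhds 0))
    (ω : B →ₗ[ℂ] ℂ)
    (hpos : ∀ b : B, 0 ≤ (b : A) → 0 ≤ ω b)
    (hstate : ω 1 = 1)
    (hinvar : ∀ s : S, ∀ b c : B, (c : A) = α s (b : A) → ω c = ω b) :
    ∃ ω' : A →ₗ[ℂ] ℂ,
      (∀ a : A, 0 ≤ a → 0 ≤ ω' a) ∧ ω' 1 = 1 ∧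
        (∀ b : B, ω' (b : A) = ω b) ∧ (∀ s : S, ∀ a : A, ω' (α s a) = ω' a) :=
  stmt11_general B α hmul hB_inv F hne hFol ω hpos hstate hinvar
end
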